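/- There is no matrix M ∈ SL(3,ℤ) such that M has eigenvalues λ, λ, λ⁻² with λ > 0 and λ ≠ 1. Equivalently: no M ∈ SL(3,ℤ) has characteristic polynomial x³ − (2λ+λ⁻²)x² + (λ²+2λ⁻¹)x − 1 with λ > 0, λ ≠ 1, unless 2λ+λ⁻² and λ²+2λ⁻¹ are both integers, which forces λ = 1; hence there is no reproducible lattice for uniaxial or biaxial stretching flow using a single automorphism. -/

import Mathlib

open Polynomial

/-- Rational root theorem for our monic cubic with constant term -1:
a positive rational root must be 1. -/
lemma stmt17_ratroot (a b : ℤ) (q : ℚ) (hq : q^3 - a*q^2 + b*q - 1 = 0)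
    (hqpos : 0 < q) : q = 1 := by
  set n : ℤ := q.num with hn
  set d : ℤ := (q.den : ℤ) with hd
  have hd0 : 0 < d := by rw [hd]; exact_mod_cast q.pos
  have hnd : (n : ℚ) = q * d := by
    have hden : ((q.den : ℤ) : ℚ) ≠ 0 := by positivity
    have h := Rat.num_div_den q
    rw [hn, hd]
    rw [div_eq_iff (by exact_mod_cast hden)] at h
    exact_mod_cast h
  have hZ : n^3 - a*n^2*d + b*n*d^2 - d^3 = 0 := by
    have : ((n^3 - a*n^2*d + b*n*d^2 - d^3 : ℤ) : ℚ) = (q^3 - a*q^2 + b*q - 1) * d^3 := by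
      push_cast
      rw [hnd]; ring
    rw [hq, zero_mul] at this
    exact_mod_cast this
  have hdvd : d ∣ n^3 := ⟨a*n^2 - b*n*d + d^2, by linarith⟩
  have hcop : IsCoprime d n := by
    rw [Int.isCoprime_iff_gcd_eq_one, Int.gcd_comm]
    exact q.reduced
  have hunit : IsUnit d := (hcop.pow_right (n := 3)).isUnit_of_dvd' dvd_rfl hdvd
  have hd1 : d = 1 := by
    rcases Int.isUnit_iff.mp hunit with h | h <;> omega
  have hqn : (n : ℚ) = q := by rw [hnd, hd1]; push_cast; ring
  have hnZ : n * (n^2 - a*n + b) = 1 := by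
    have := hZ
    rw [hd1] at this
    ring_nf
    ring_nf at this
    linarith
  have hnunit : IsUnit n := IsUnit.of_mul_eq_one _ hnZ
  have hn1 : n = 1 := by
    rcases Int.isUnit_iff.mp hnunit with h | h
    · exact h
    · exfalso
      have : (n:ℚ) > 0 := by rw [hqn]; exact hqpos
      rw [h] at this; norm_num at this
  rw [← hqn, hn1]; norm_num

/-- The arithmetic core: no integers a = 2λ + λ⁻², b = λ² + 2/λ for real λ > 0, λ ≠ 1. -/
lemma stmt17_key (lam : ℝ) (hpos : 0 < lam) (hne : lam ≠ 1) (a b : ℤ)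
    (ha : (a:ℝ) = 2*lam + (lam^2)⁻¹) (hb : (b:ℝ) = lam^2 + 2/lam) : False := by
  have hl0 : lam ≠ 0 := ne_of_gt hpos
  have E1 : (a:ℝ) * lam^2 = 2*lam^3 + 1 := by
    rw [ha]; field_simp
  have E2 : (b:ℝ) * lam = lam^3 + 2 := by
    rw [hb]; field_simp
  have cubic : lam^3 - (a:ℝ)*lam^2 + (b:ℝ)*lam - 1 = 0 := by
    rw [E1, E2]; ring
  have Q : (a:ℝ)*lam^2 - 2*(b:ℝ)*lam + 3 = 0 := by
    linear_combination E1 - 2*E2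
  have ha0 : a ≠ 0 := by
    intro h
    rw [h] at ha
    push_cast at ha
    nlinarith [sq_nonneg lam, inv_pos.mpr (pow_pos hpos 2)]
  have ha0' : (a:ℝ) ≠ 0 := Int.cast_ne_zero.mpr ha0
  have hcube : lam^3 = (b:ℝ)*lam - 2 := by
    linear_combination (Q - E1)/2
  have hlin : ((a^2*b - 4*b^2 + 3*a : ℤ) : ℝ) * lam = ((2*a^2 - 6*b : ℤ) : ℝ) := by
    push_cast
    have h2 : (a:ℝ)*lam^2 = 2*(b:ℝ)*lam - 3 := by linarith
    linear_combination ((a:ℝ)*lam + 2*(b:ℝ)) * h2 - (a:ℝ)^2 * hcube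
  set K : ℤ := a^2*b - 4*b^2 + 3*a with hK
  set R : ℤ := 2*a^2 - 6*b with hR
  by_cases hK0 : K = 0
  · have hR0 : (R:ℝ) = 0 := by rw [← hlin, hK0]; push_cast; ring
    have hR0' : R = 0 := by exact_mod_cast hR0
    have hab1 : a^2 = 3*b := by linarith
    rw [hK] at hK0
    have hab2 : b^2 = 3*a := by linear_combination b*hab1 - hK0
    have h27 : a * a^3 = a * 27 := by linear_combination 9*hab2 + (3*b + a^2)*hab1
    have h27' : a^3 = 27 := mul_left_cancel₀ ha0 h27
    have hfac : (a-3)*(a^2+3*a+9) = 0 := by linear_combination h27'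
    have hposf : 0 < a^2+3*a+9 := by nlinarith [sq_nonneg (2*a+3)]
    have ha3 : a = 3 := by
      rcases mul_eq_zero.mp hfac with h | h
      · omega
      · omega
    have hb3 : b = 3 := by nlinarith
    rw [ha3, hb3] at Q
    push_cast at Q
    have : (lam - 1)^2 = 0 := by linarith [sq_nonneg (lam-1)]
    exact hne (by nlinarith [this])
  · have hK0' : (K:ℝ) ≠ 0 := Int.cast_ne_zero.mpr hK0
    set q : ℚ := (R:ℚ)/(K:ℚ) with hq
    have hql : (q:ℝ) = lam := by
      rw [hq]
      push_cast
      rw [div_eq_iff (by exact_mod_cast hK0')]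
      rw [← hlin]; ring
    have hq3 : q^3 - (a:ℚ)*q^2 + (b:ℚ)*q - 1 = 0 := by
      have : ((q^3 - (a:ℚ)*q^2 + (b:ℚ)*q - 1 : ℚ) : ℝ) = 0 := by
        push_cast
        rw [hql]
        exact cubic
      exact_mod_cast this
    have hqpos : 0 < q := by
      have : (0:ℝ) < (q:ℝ) := by rw [hql]; exact hpos
      exact_mod_cast this
    have := stmt17_ratroot a b q hq3 hqpos
    apply hne
    rw [← hql, this]; norm_num

/-- No M ∈ SL(3,ℤ) has eigenvalues λ, λ, λ⁻² with λ > 0, λ ≠ 1: there is no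
reproducible lattice for uniaxial or biaxial stretching flow. -/
theorem stmt17 (lam : ℝ) (hpos : 0 < lam) (hne : lam ≠ 1) :
    ¬ ∃ M : Matrix (Fin 3) (Fin 3) ℤ, M.det = 1 ∧
      (M.map (Int.cast : ℤ → ℝ)).charpoly =
        (X - C lam) * (X - C lam) * (X - C (lam ^ 2)⁻¹) := by
  rintro ⟨M, hdet, hM⟩
  have hl0 : lam ≠ 0 := ne_of_gt hpos
  set μ : ℝ := (lam^2)⁻¹ with hmu
  have hmap : (M.charpoly).map (Int.castRingHom ℝ) =
      (X - C lam) * (X - C lam) * (X - C μ) := by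
    rw [← Matrix.charpoly_map]
    exact hM
  have hexp : (X - C lam) * (X - C lam) * (X - C μ) =
      X^3 - C (2*lam + μ) * X^2 + C (lam*lam + 2*(lam*μ)) * X - C (lam*(lam*μ)) := by
    simp only [C_add, C_mul, map_ofNat]
    ring
  have h2 : ((M.charpoly.coeff 2 : ℤ) : ℝ) = -(2*lam + μ) := by
    have := congrArg (fun p => Polynomial.coeff p 2) hmap
    simp only [coeff_map, hexp, coeff_add, coeff_sub, coeff_C_mul, coeff_X_pow, coeff_C,
      coeff_X, mul_assoc] at this
    simpa using this
  have h1 : ((M.charpoly.coeff 1 : ℤ) : ℝ) = lam*lam + 2*(lam*μ) := by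
    have := congrArg (fun p => Polynomial.coeff p 1) hmap
    simp only [coeff_map, hexp, coeff_add, coeff_sub, coeff_C_mul, coeff_X_pow, coeff_C,
      coeff_X, mul_assoc] at this
    simpa using this
  refine stmt17_key lam hpos hne (-(M.charpoly.coeff 2)) (M.charpoly.coeff 1) ?_ ?_
  · push_cast
    rw [h2, hmu]; ring
  · rw [h1, hmu]
    field_simp
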